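/- arXiv:1008.0124 — 2 statements merged into one kernel-verified Lean document; each statement's English description precedes it below -/
import Mathlib

section
/- Let k ≥ 1 and let G be a group containing elements σ₁, …, σ_{2k} with σᵢσⱼσᵢ = σⱼσᵢσⱼ for |i−j| = 1 and σᵢσⱼ = σⱼσᵢ for |i−j| ≥ 2. Set x = σ₁σ₂⋯σ_k and y = σ_{k+1}σ_{k+2}⋯σ_{2k}. Then prod(x,y;2k+1) = prod(y,x;2k+1), i.e., x and y satisfy the Artin relation of odd length 2k+1. -/
/-!
With `c = σ₁ σ₂ ⋯ σ_{2k} = x y`, the braid and commutation relations give `c σᵢ = σᵢ₊₁ c`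
for `i < 2k`, so `c` shifts every block of consecutive generators by one and `c ^ k x = y c ^ k`.
Both sides of the Artin relation reduce to this identity:
`prod(x, y; 2k+1) = (x y) ^ k x = c ^ k x` and `prod(y, x; 2k+1) = y (x y) ^ k = y c ^ k`.
-/

/-- `altProd a b ℓ` is the alternating product `a * b * a * ⋯` with `ℓ` factors, starting with `a`. -/
def altProd {G : Type*} [Monoid G] : G → G → ℕ → G
  | _, _, 0 => 1
  | a, b, n + 1 => a * altProd b a n

section Monoid

variable {M : Type*} [Monoid M]

theorem altProd_two_mul_add_one (a b : M) (n : ℕ) :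
    altProd a b (2 * n + 1) = (a * b) ^ n * a := by
  induction n generalizing a b with
  | zero => simp [altProd]
  | succ n ih =>
    rw [show 2 * (n + 1) + 1 = 2 * n + 1 + 1 + 1 by ring, altProd, altProd, ih, pow_succ']
    simp only [mul_assoc]

def chainProd (σ : ℕ → M) (s n : ℕ) : M :=
  ((List.range' s n).map σ).prod

variable {σ : ℕ → M}

theorem chainProd_zero (s : ℕ) : chainProd σ s 0 = 1 := rfl

theorem chainProd_succ (s n : ℕ) : chainProd σ s (n + 1) = σ s * chainProd σ (s + 1) n := rfl

theorem chainProd_two (s : ℕ) : chainProd σ s 2 = σ s * σ (s + 1) := by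
  simp [chainProd_succ, chainProd_zero]

theorem chainProd_add (s m n : ℕ) :
    chainProd σ s (m + n) = chainProd σ s m * chainProd σ (s + m) n := by
  simp only [chainProd, ← List.range'_append_1, List.map_append, List.prod_append]

theorem chainProd_eq_prod_map_range (s n : ℕ) :
    chainProd σ s n = ((List.range n).map fun i => σ (s + i)).prod := by
  rw [chainProd, List.range'_eq_map_range, List.map_map]
  rfl

theorem Commute.chainProd_right {a : M} {s n : ℕ}
    (h : ∀ j, s ≤ j → j < s + n → Commute a (σ j)) : Commute a (chainProd σ s n) :=
  Commute.list_prod_right _ _ fun _ hx => by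
    obtain ⟨j, hj, rfl⟩ := List.mem_map.1 hx
    rw [List.mem_range'_1] at hj
    exact h j hj.1 hj.2

theorem SemiconjBy.chainProd_right {a : M} {s n : ℕ}
    (h : ∀ j, s ≤ j → j < s + n → SemiconjBy a (σ j) (σ (j + 1))) :
    SemiconjBy a (chainProd σ s n) (chainProd σ (s + 1) n) := by
  induction n generalizing s with
  | zero => exact SemiconjBy.one_right a
  | succ n ih =>
    rw [chainProd_succ, chainProd_succ]
    exact (h s le_rfl (by omega)).mul_right (ih fun j hj hj' => h j (by omega) (by omega))

section Braid

variable {n : ℕ}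
  (hbraid : ∀ i, 1 ≤ i → i + 1 ≤ n → σ i * σ (i + 1) * σ i = σ (i + 1) * σ i * σ (i + 1))
  (hcomm : ∀ i j, 1 ≤ i → i + 2 ≤ j → j ≤ n → σ i * σ j = σ j * σ i)
include hbraid hcomm

theorem semiconjBy_chainProd_one {i : ℕ} (hi : 1 ≤ i) (hin : i + 1 ≤ n) :
    SemiconjBy (chainProd σ 1 n) (σ i) (σ (i + 1)) := by
  obtain ⟨p, rfl⟩ : ∃ p, i = p + 1 := ⟨i - 1, by omega⟩
  obtain ⟨m, rfl⟩ : ∃ m, n = p + 2 + m := ⟨n - (p + 2), by omega⟩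
  rw [chainProd_add, chainProd_add, chainProd_two, add_comm 1 p]
  have hhead : Commute (σ (p + 1 + 1)) (chainProd σ 1 p) :=
    Commute.chainProd_right fun j hj hjp => (hcomm j (p + 1 + 1) hj (by omega) (by omega)).symm
  have hmiddle : SemiconjBy (σ (p + 1) * σ (p + 1 + 1)) (σ (p + 1)) (σ (p + 1 + 1)) := by
    simpa only [SemiconjBy, mul_assoc] using hbraid (p + 1) (by omega) (by omega)
  have htail : Commute (σ (p + 1)) (chainProd σ (1 + (p + 2)) m) :=
    Commute.chainProd_right fun j hj hjm => hcomm (p + 1) j (by omega) (by omega) (by omega)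
  exact (SemiconjBy.mul_left hhead.symm hmiddle).mul_left htail.symm

theorem semiconjBy_pow_chainProd_one {s m : ℕ} (hs : 1 ≤ s) (j : ℕ) (hj : s + j + m ≤ n + 1) :
    SemiconjBy (chainProd σ 1 n ^ j) (chainProd σ s m) (chainProd σ (s + j) m) := by
  induction j with
  | zero => rw [pow_zero, add_zero]; exact SemiconjBy.one_left _
  | succ j ih =>
    rw [pow_succ', ← add_assoc]
    exact SemiconjBy.mul_left (SemiconjBy.chainProd_right fun l hl hlm =>
      semiconjBy_chainProd_one hbraid hcomm (by omega) (by omega)) (ih (by omega))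

end Braid

end Monoid

theorem odd_artin_relation_general {G : Type*} [Group G] (k : ℕ) (σ : ℕ → G)
    (hbraid : ∀ i, 1 ≤ i → i + 1 ≤ 2 * k → σ i * σ (i + 1) * σ i = σ (i + 1) * σ i * σ (i + 1))
    (hcomm : ∀ i j, 1 ≤ i → i + 2 ≤ j → j ≤ 2 * k → σ i * σ j = σ j * σ i) :
    altProd (((List.range k).map (fun i => σ (i + 1))).prod)
        (((List.range k).map (fun i => σ (k + 1 + i))).prod) (2 * k + 1)
      = altProd (((List.range k).map (fun i => σ (k + 1 + i))).prod)
        (((List.range k).map (fun i => σ (i + 1))).prod) (2 * k + 1) := by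
  have hx : ((List.range k).map (fun i => σ (i + 1))).prod = chainProd σ 1 k := by
    simp only [chainProd_eq_prod_map_range, add_comm 1]
  have hy : ((List.range k).map (fun i => σ (k + 1 + i))).prod = chainProd σ (k + 1) k :=
    (chainProd_eq_prod_map_range _ _).symm
  have hxy : chainProd σ 1 k * chainProd σ (k + 1) k = chainProd σ 1 (2 * k) := by
    rw [two_mul, chainProd_add, add_comm 1 k]
  have hshift := semiconjBy_pow_chainProd_one (m := k) hbraid hcomm le_rfl k (by omega)
  have hyx : SemiconjBy (chainProd σ (k + 1) k)
      (chainProd σ 1 k * chainProd σ (k + 1) k) (chainProd σ (k + 1) k * chainProd σ 1 k) :=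
    (mul_assoc _ _ _).symm
  rw [hx, hy, altProd_two_mul_add_one, altProd_two_mul_add_one, ← (hyx.pow_right k).eq, hxy,
    hshift.eq, add_comm 1 k]

theorem odd_artin_relation {G : Type*} [Group G] (k : ℕ) (hk : 1 ≤ k) (σ : ℕ → G)
    (hbraid : ∀ i, 1 ≤ i → i + 1 ≤ 2 * k → σ i * σ (i + 1) * σ i = σ (i + 1) * σ i * σ (i + 1))
    (hcomm : ∀ i j, 1 ≤ i → i + 2 ≤ j → j ≤ 2 * k → σ i * σ j = σ j * σ i) :
    altProd (((List.range k).map (fun i => σ (i + 1))).prod)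
        (((List.range k).map (fun i => σ (k + 1 + i))).prod) (2 * k + 1)
      = altProd (((List.range k).map (fun i => σ (k + 1 + i))).prod)
        (((List.range k).map (fun i => σ (i + 1))).prod) (2 * k + 1) :=
  odd_artin_relation_general k σ hbraid hcomm
end

section
/- Let G be the braid group B₄ and let T₀, T₁, T₂ be its standard generators σ₁, σ₂, σ₃ (so T₀T₁T₀ = T₁T₀T₁, T₁T₂T₁ = T₂T₁T₂, and T₀T₂ = T₂T₀). Set x = T₀ = σ₁ and y = T₁T₂ = σ₂σ₃. Then for a positive integer ℓ, prod(x,y;ℓ) = prod(y,x;ℓ) if and only if 8 divides ℓ. -/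
/-- The defining relators of the braid group `B₄` on the standard generators `σ₁, σ₂, σ₃`
(indexed by `0, 1, 2 : Fin 3`). -/
def braidRelsB4 : Set (FreeGroup (Fin 3)) :=
  { FreeGroup.of 0 * FreeGroup.of 1 * FreeGroup.of 0
      * (FreeGroup.of 1 * FreeGroup.of 0 * FreeGroup.of 1)⁻¹,
    FreeGroup.of 1 * FreeGroup.of 2 * FreeGroup.of 1
      * (FreeGroup.of 2 * FreeGroup.of 1 * FreeGroup.of 2)⁻¹,
    FreeGroup.of 0 * FreeGroup.of 2 * (FreeGroup.of 2 * FreeGroup.of 0)⁻¹ }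

/-- The braid group on 4 strands, as a presented group. -/
abbrev BraidB4 : Type := PresentedGroup braidRelsB4

-- relations hold
lemma braid_rel_one (r : FreeGroup (Fin 3)) (hr : r ∈ braidRelsB4) :
    PresentedGroup.mk braidRelsB4 r = 1 :=
  (QuotientGroup.eq_one_iff r).mpr (Subgroup.subset_normalClosure hr)

lemma braid_h1 : (PresentedGroup.of 0 : BraidB4) * PresentedGroup.of 1 * PresentedGroup.of 0
    = PresentedGroup.of 1 * PresentedGroup.of 0 * PresentedGroup.of 1 := by
  have e := braid_rel_one _ (show _ ∈ braidRelsB4 from by left; rfl)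
  simp only [map_mul, map_inv] at e
  exact mul_inv_eq_one.mp e

lemma braid_h2 : (PresentedGroup.of 1 : BraidB4) * PresentedGroup.of 2 * PresentedGroup.of 1
    = PresentedGroup.of 2 * PresentedGroup.of 1 * PresentedGroup.of 2 := by
  have e := braid_rel_one _ (show _ ∈ braidRelsB4 from by right; left; rfl)
  simp only [map_mul, map_inv] at e
  exact mul_inv_eq_one.mp e

lemma braid_h3 : (PresentedGroup.of 0 : BraidB4) * PresentedGroup.of 2
    = PresentedGroup.of 2 * PresentedGroup.of 0 := by
  have e := braid_rel_one _ (show _ ∈ braidRelsB4 from by right; right; rfl)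
  simp only [map_mul, map_inv] at e
  exact mul_inv_eq_one.mp e

-- permutation quotient
def braidPermF : Fin 3 → Equiv.Perm (Fin 4) := fun i => Equiv.swap i.castSucc i.succ

lemma braidPerm_cond : ∀ r ∈ braidRelsB4, FreeGroup.lift braidPermF r = 1 := by
  intro r hr
  rcases hr with rfl | rfl | rfl <;> · simp only [map_mul, map_inv, FreeGroup.lift_apply_of]; decide

def braidPerm : BraidB4 →* Equiv.Perm (Fin 4) := PresentedGroup.toGroup braidPerm_cond

-- abelianization quotient
def braidAbF : Fin 3 → Multiplicative ℤ := fun _ => Multiplicative.ofAdd 1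

lemma braidAb_cond : ∀ r ∈ braidRelsB4, FreeGroup.lift braidAbF r = 1 := by
  intro r hr
  rcases hr with rfl | rfl | rfl <;> · simp only [map_mul, map_inv, FreeGroup.lift_apply_of]; decide

def braidAb : BraidB4 →* Multiplicative ℤ := PresentedGroup.toGroup braidAb_cond

example : braidPerm (PresentedGroup.of 0) = braidPermF 0 := PresentedGroup.toGroup.of _

lemma altProd_map {G H : Type*} [Monoid G] [Monoid H] (φ : G →* H) :
    ∀ (n : ℕ) (a b : G), φ (altProd a b n) = altProd (φ a) (φ b) n
  | 0, a, b => by simp [altProd]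
  | n + 1, a, b => by simp [altProd, altProd_map φ n b a]

lemma altProd_even {G : Type*} [Monoid G] (a b : G) :
    ∀ k : ℕ, altProd a b (2 * k) = (a * b) ^ k
  | 0 => by simp [altProd]
  | k + 1 => by
    have : 2 * (k + 1) = (2 * k) + 1 + 1 := by ring
    rw [this]
    show a * (b * altProd a b (2 * k)) = (a * b) ^ (k + 1)
    rw [altProd_even a b k, pow_succ' (a*b) k, mul_assoc]

lemma altProd_odd {G : Type*} [Monoid G] (a b : G) (k : ℕ) :
    altProd a b (2 * k + 1) = (a * b) ^ k * a := by
  rw [show 2*k+1 = 1 + 2*k from by ring]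
  induction k with
  | zero => simp [altProd]
  | succ k ih =>
    rw [show 1 + 2*(k+1) = (1 + 2*k) + 1 + 1 from by ring]
    show a * (b * altProd a b (1 + 2*k)) = (a*b)^(k+1) * a
    rw [ih, pow_succ' (a*b) k]
    simp [mul_assoc]

lemma delta4_comm {G : Type*} [Group G] {a b c : G}
    (h1 : a*b*a = b*a*b) (h2 : b*c*b = c*b*c) (h3 : a*c = c*a) :
    Commute a ((a*(b*c))^4) := by
  set d := a*(b*c) with hd
  have r1 : d*a = b*d := by
    rw [hd]
    calc a*(b*c)*a = a*b*(c*a) := by group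
      _ = a*b*(a*c) := by rw [← h3]
      _ = a*b*a*c := by group
      _ = b*a*b*c := by rw [h1]
      _ = b*(a*(b*c)) := by group
  have r2 : d*b = c*d := by
    rw [hd]
    calc a*(b*c)*b = a*(b*c*b) := by group
      _ = a*(c*b*c) := by rw [h2]
      _ = a*c*(b*c) := by group
      _ = c*a*(b*c) := by rw [h3]
      _ = c*(a*(b*c)) := by group
  have r3 : d*(d*c) = a*(d*d) := by
    rw [hd]
    calc (a*(b*c))*((a*(b*c))*c)
        = a*b*(c*a)*b*(c*c) := by group
      _ = a*b*(a*c)*b*(c*c) := by rw [← h3]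
      _ = a*b*a*(c*b*c)*c := by group
      _ = a*b*a*(b*c*b)*c := by rw [← h2]
      _ = a*(b*a*b)*c*(b*c) := by group
      _ = a*(a*b*a)*c*(b*c) := by rw [← h1]
      _ = a*a*b*(a*c)*(b*c) := by group
      _ = a*a*b*(c*a)*(b*c) := by rw [h3]
      _ = a*((a*(b*c))*(a*(b*c))) := by group
  have key : d^4 * a = a * d^4 := by
    calc d^4*a = d*(d*(d*(d*a))) := by simp [pow_succ, mul_assoc]
      _ = d*(d*(d*(b*d))) := by rw [r1]
      _ = d*(d*((d*b)*d)) := by group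
      _ = d*(d*((c*d)*d)) := by rw [r2]
      _ = (d*(d*c))*(d*d) := by group
      _ = (a*(d*d))*(d*d) := by rw [r3]
      _ = a*d^4 := by simp [pow_succ, mul_assoc]
  exact key.symm

theorem braidB4_artin_iff_eight_dvd :
    ∀ ℓ : ℕ, 0 < ℓ →
      (altProd (PresentedGroup.of 0 : BraidB4) (PresentedGroup.of 1 * PresentedGroup.of 2) ℓ
          = altProd ((PresentedGroup.of 1 : BraidB4) * PresentedGroup.of 2)
              (PresentedGroup.of 0) ℓ
        ↔ 8 ∣ ℓ) := by
  intro ℓ _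
  have ea : ∀ i, braidPerm (PresentedGroup.of i) = braidPermF i :=
    fun i => PresentedGroup.toGroup.of _
  have eb : ∀ i, braidAb (PresentedGroup.of i) = Multiplicative.ofAdd (1 : ℤ) :=
    fun i => PresentedGroup.toGroup.of _
  set a : BraidB4 := PresentedGroup.of 0 with ha
  set b : BraidB4 := PresentedGroup.of 1 with hb
  set c : BraidB4 := PresentedGroup.of 2 with hc
  have hcomm4 : Commute a ((a*(b*c))^4) := delta4_comm braid_h1 braid_h2 braid_h3
  have hyx : ∀ n : ℕ, ((b*c)*a)^n = a⁻¹ * ((a*(b*c))^n) * a := by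
    intro n
    rw [show (b*c)*a = a⁻¹*(a*(b*c))*a⁻¹⁻¹ from by group, conj_pow, inv_inv]
  rcases Nat.even_or_odd ℓ with he | ho
  · obtain ⟨k, hk⟩ := he
    rw [hk, show k + k = 2*k from (two_mul k).symm]
    rw [altProd_even, altProd_even]
    constructor
    · intro h
      rw [hyx] at h
      have hcm : a * (a*(b*c))^k = (a*(b*c))^k * a := by
        conv_lhs => rw [h]
        rw [← mul_assoc, ← mul_assoc, mul_inv_cancel, one_mul]
      have hP := congrArg braidPerm hcm
      simp only [map_mul, map_pow, ha, hb, hc, ea] at hP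
      set s : Equiv.Perm (Fin 4) := braidPermF 0 with hs
      set π : Equiv.Perm (Fin 4) := braidPermF 0 * (braidPermF 1 * braidPermF 2) with hπ
      have π4 : π^4 = 1 := by rw [hπ]; decide
      have hsplit : π^k = (π^4)^(k/4) * π^(k%4) := by
        rw [← pow_mul, ← pow_add, Nat.div_add_mod]
      rw [hsplit, π4, one_pow, one_mul] at hP
      have hmod : k % 4 = 0 ∨ k % 4 = 1 ∨ k % 4 = 2 ∨ k % 4 = 3 := by omega
      have : k % 4 = 0 := by
        rcases hmod with h'|h'|h'|h'
        · exact h'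
        all_goals (rw [h', hs, hπ] at hP; exact absurd hP (by decide))
      omega
    · intro h8
      obtain ⟨m, hm⟩ : ∃ m, k = 4*m := ⟨k / 4, by omega⟩
      subst hm
      rw [hyx]
      have hC : Commute a ((a*(b*c))^(4*m)) := by
        rw [pow_mul]; exact hcomm4.pow_right m
      rw [mul_assoc, ← hC.eq, ← mul_assoc a⁻¹ a, inv_mul_cancel, one_mul]
  · obtain ⟨k, hk⟩ := ho
    rw [hk]
    constructor
    · intro h
      exfalso
      have hA := congrArg braidAb h
      rw [altProd_map, altProd_map, altProd_odd, altProd_odd] at hA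
      simp only [map_mul, ha, hb, hc, eb] at hA
      have := congrArg Multiplicative.toAdd hA
      simp [toAdd_mul, toAdd_pow] at this
    · intro h8
      exfalso
      omega
end
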